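/- Under the setup of the previous statement, if $\omega \equiv 0 \pmod{\pi}$, then $\mathbb{E}[T_{n,Z}(\omega)^2] = n(n-1)\mathbb{E}[\tilde Z_1^2 \tilde Z_2^2] + \big(2n\sum_{h=1}^{n-1}\cos(2h\omega) - 2\sum_{h=1}^{n-1}h\cos(2h\omega)\big)\mathbb{E}[\tilde Z_1^2\tilde Z_2^2] = 2n(n-1)\mathbb{E}[\tilde Z_1^2 \tilde Z_2^2]$. -/

import Mathlib

/-!
Expanding the square, `T²` is a weighted double sum of fourth moments
`E[Z̃_t Z̃_{t+h} Z̃_s Z̃_{s+g}]`. Since the `Z_i` are i.i.d. and symmetric, the joint law of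
`(Z_i)` is invariant under changing the sign of one coordinate and under permuting coordinates,
and the normaliser `√(∑ Z_s²)` is invariant under both. A sign change kills every fourth moment
in which some index occurs exactly once, which is the case unless `(h, t) = (g, s)`; permutations
show that all the surviving moments `E[Z̃_t² Z̃_{t+h}²]` equal `E[Z̃_1² Z̃_2²]`. Each lag `h`
contributes `n - h` of them with weight `4 cos² (h ω) = 4`, and `∑_{h<n} (n - h) = n(n-1)/2`.
-/

open MeasureTheory ProbabilityTheory Finset

section SelfNormalize

variable {ι : Type*}

noncomputable def selfNormalize (S : Finset ι) (x : ι → ℝ) (t : ι) : ℝ :=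
  x t / √(∑ s ∈ S, x s ^ 2)

variable (S : Finset ι)

@[fun_prop]
lemma measurable_selfNormalize (t : ι) : Measurable fun x : ι → ℝ => selfNormalize S x t := by
  unfold selfNormalize; fun_prop

lemma abs_selfNormalize_le_one {t : ι} (ht : t ∈ S) (x : ι → ℝ) : |selfNormalize S x t| ≤ 1 := by
  rw [selfNormalize, abs_div, abs_of_nonneg (Real.sqrt_nonneg _)]
  exact div_le_one_of_le₀ (Real.abs_le_sqrt (single_le_sum (fun s _ => sq_nonneg (x s)) ht))
    (Real.sqrt_nonneg _)

lemma selfNormalize_update_neg [DecidableEq ι] (x : ι → ℝ) (m t : ι) :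
    selfNormalize S (Function.update x m (-x m)) t =
      if t = m then -selfNormalize S x t else selfNormalize S x t := by
  have hsq : ∀ s, Function.update x m (-x m) s ^ 2 = x s ^ 2 := fun s => by
    rcases eq_or_ne s m with rfl | h <;> simp [*]
  simp only [selfNormalize, hsq]
  split_ifs with h <;> simp [h, neg_div]

lemma selfNormalize_comp_perm (σ : Equiv.Perm ι) (hσ : ∀ s ∉ S, σ s = s) (x : ι → ℝ) (t : ι) :
    selfNormalize S (x ∘ σ) t = selfNormalize S x (σ t) := by
  have hsum : ∑ s ∈ S, (x ∘ σ) s ^ 2 = ∑ s ∈ S, x s ^ 2 :=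
    σ.sum_comp S (fun s => x s ^ 2) fun s hs => by_contra fun h => hs (hσ s h)
  rw [selfNormalize, selfNormalize, hsum, Function.comp_apply]

end SelfNormalize

lemma integrable_selfNormalize_mul {Ω ι : Type*} [MeasurableSpace Ω] {P : Measure Ω}
    [IsFiniteMeasure P] {Z : ι → Ω → ℝ} (hZ : ∀ i, Measurable (Z i)) (S : Finset ι)
    {a b c d : ι} (ha : a ∈ S) (hb : b ∈ S) (hc : c ∈ S) (hd : d ∈ S) :
    Integrable (fun ω => selfNormalize S (Z · ω) a * selfNormalize S (Z · ω) b *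
      selfNormalize S (Z · ω) c * selfNormalize S (Z · ω) d) P := by
  refine .of_bound (by fun_prop) 1 (.of_forall fun ω => ?_)
  have h : ∀ {t}, t ∈ S → |selfNormalize S (Z · ω) t| ≤ 1 := fun ht =>
    abs_selfNormalize_le_one S ht _
  simp only [Real.norm_eq_abs, abs_mul]
  exact mul_le_one₀ (mul_le_one₀ (mul_le_one₀ (h ha) (abs_nonneg _) (h hb)) (abs_nonneg _) (h hc))
    (abs_nonneg _) (h hd)

section IdentDistrib

variable {Ω ι : Type*} [MeasurableSpace Ω] {P : Measure Ω}
  {β : Type*} [MeasurableSpace β]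

lemma identDistrib_pi_of_iIndepFun {X Y : ι → Ω → β} (hX : ∀ i, Measurable (X i))
    (hY : ∀ i, Measurable (Y i)) (hXi : iIndepFun X P) (hYi : iIndepFun Y P)
    (hXY : ∀ i, P.map (X i) = P.map (Y i)) :
    IdentDistrib (fun ω i => X i ω) (fun ω i => Y i ω) P P where
  aemeasurable_fst := (measurable_pi_lambda _ hX).aemeasurable
  aemeasurable_snd := (measurable_pi_lambda _ hY).aemeasurable
  map_eq := by
    rw [hXi.map_fun_eq_infinitePi_map hX, hYi.map_fun_eq_infinitePi_map hY]
    simp_rw [hXY]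

variable {Z : ι → Ω → ℝ} (hZ : ∀ i, Measurable (Z i)) (hindep : iIndepFun Z P)
include hZ hindep

lemma identDistrib_update_neg [DecidableEq ι] {m : ι}
    (hm : P.map (Z m) = P.map (fun ω => -Z m ω)) :
    IdentDistrib (fun ω i => Z i ω) (fun ω => Function.update (fun i => Z i ω) m (-Z m ω)) P P := by
  let g : ι → ℝ → ℝ := fun i => if i = m then Neg.neg else id
  have hg : ∀ i, Measurable (g i) := fun i => by dsimp only [g]; split_ifs <;> fun_prop
  convert identDistrib_pi_of_iIndepFun hZ (fun i => (hg i).comp (hZ i)) hindep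
    (hindep.comp g hg) fun i => ?_ using 1
  · ext ω i
    rcases eq_or_ne i m with rfl | h <;> simp [g, *]
  · rcases eq_or_ne i m with rfl | h
    · simp only [g, if_pos rfl]
      exact hm
    · simp [g, h]

lemma identDistrib_comp_perm (hident : ∀ i j, IdentDistrib (Z i) (Z j) P P) (σ : Equiv.Perm ι) :
    IdentDistrib (fun ω i => Z i ω) (fun ω => (fun i => Z i ω) ∘ σ) P P :=
  identDistrib_pi_of_iIndepFun hZ (fun i => hZ (σ i)) hindep (hindep.precomp σ.injective)
    fun i => (hident i (σ i)).map_eq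

end IdentDistrib

section Moments

variable {Ω ι : Type*} [MeasurableSpace Ω] {P : Measure Ω} {Z : ι → Ω → ℝ}
  (hZ : ∀ i, Measurable (Z i)) (hindep : iIndepFun Z P) (S : Finset ι)
include hZ hindep

lemma integral_selfNormalize_mul_eq_zero [DecidableEq ι] {a b c d : ι}
    (ha : P.map (Z a) = P.map (fun ω => -Z a ω)) (hab : a ≠ b) (hac : a ≠ c) (had : a ≠ d) :
    ∫ ω, selfNormalize S (Z · ω) a * selfNormalize S (Z · ω) b *
      selfNormalize S (Z · ω) c * selfNormalize S (Z · ω) d ∂P = 0 := by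
  set F : (ι → ℝ) → ℝ := fun x =>
    selfNormalize S x a * selfNormalize S x b * selfNormalize S x c * selfNormalize S x d
  have hF : ∀ x, F (Function.update x a (-x a)) = -F x := fun x => by
    simp only [F, selfNormalize_update_neg, ↓reduceIte, if_neg hab.symm, if_neg hac.symm,
      if_neg had.symm]
    ring
  have h := ((identDistrib_update_neg hZ hindep ha).comp (by fun_prop : Measurable F)).integral_eq
  simp only [Function.comp_def, hF, integral_neg] at h
  linarith

lemma integral_selfNormalize_sq_mul_sq_comp_perm (hident : ∀ i j, IdentDistrib (Z i) (Z j) P P)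
    (σ : Equiv.Perm ι) (hσ : ∀ s ∉ S, σ s = s) (a b : ι) :
    ∫ ω, selfNormalize S (Z · ω) (σ a) ^ 2 * selfNormalize S (Z · ω) (σ b) ^ 2 ∂P =
      ∫ ω, selfNormalize S (Z · ω) a ^ 2 * selfNormalize S (Z · ω) b ^ 2 ∂P := by
  have hF : Measurable fun x => selfNormalize S x a ^ 2 * selfNormalize S x b ^ 2 := by fun_prop
  have h := ((identDistrib_comp_perm hZ hindep hident σ).comp hF).integral_eq
  simp only [Function.comp_apply, selfNormalize_comp_perm S σ hσ] at h
  exact h.symm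

lemma integral_selfNormalize_sq_mul_sq_eq [DecidableEq ι]
    (hident : ∀ i j, IdentDistrib (Z i) (Z j) P P) {a b c d : ι} (ha : a ∈ S) (hb : b ∈ S)
    (hc : c ∈ S) (hd : d ∈ S) (hab : a ≠ b) (hcd : c ≠ d) :
    ∫ ω, selfNormalize S (Z · ω) a ^ 2 * selfNormalize S (Z · ω) b ^ 2 ∂P =
      ∫ ω, selfNormalize S (Z · ω) c ^ 2 * selfNormalize S (Z · ω) d ^ 2 ∂P := by
  set d' := Equiv.swap c a d
  have hd'a : d' ≠ a := fun h => hcd (by simpa [d'] using (congrArg (Equiv.swap c a) h).symm)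
  have hd' : d' ∈ S := by
    simp only [d', Equiv.swap_apply_def]; split_ifs <;> assumption
  set σ := Equiv.swap d' b * Equiv.swap c a
  have hσc : σ c = a := by
    simp [σ, Equiv.swap_apply_of_ne_of_ne hd'a.symm hab]
  have hσd : σ d = b := by simp [σ, d']
  have hσ : ∀ s ∉ S, σ s = s := fun s hs => by
    have hne : ∀ t ∈ S, s ≠ t := fun t ht h => hs (h ▸ ht)
    simp [σ, Equiv.swap_apply_of_ne_of_ne (hne c hc) (hne a ha),
      Equiv.swap_apply_of_ne_of_ne (hne d' hd') (hne b hb)]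
  rw [← integral_selfNormalize_sq_mul_sq_comp_perm hZ hindep S hident σ hσ c d, hσc, hσd]

end Moments

section LagSum

variable {Ω : Type*} [MeasurableSpace Ω] {P : Measure Ω} {X : ℕ → Ω → ℝ} {n : ℕ} {m : ℝ}

/-- `⟨h, t⟩` indexes the term `X t * X (t + h)` of the lag-`h` sum. -/
def lagPairs (n : ℕ) : Finset (Σ _ : ℕ, ℕ) := (Icc 1 (n - 1)).sigma fun h => Icc 1 (n - h)

lemma mk_mem_lagPairs {h t : ℕ} : ⟨h, t⟩ ∈ lagPairs n ↔ 1 ≤ h ∧ 1 ≤ t ∧ t + h ≤ n := by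
  simp only [lagPairs, mem_sigma, mem_Icc]
  omega

variable
  (hodd : ∀ a ∈ Icc 1 n, ∀ b ∈ Icc 1 n, ∀ c ∈ Icc 1 n, ∀ d ∈ Icc 1 n, a ≠ b → a ≠ c → a ≠ d →
    ∫ ω, X a ω * X b ω * X c ω * X d ω ∂P = 0)
  (hpair : ∀ a ∈ Icc 1 n, ∀ b ∈ Icc 1 n, a ≠ b → ∫ ω, X a ω ^ 2 * X b ω ^ 2 ∂P = m)
include hodd hpair

lemma integral_lagPairs_product {p q : Σ _ : ℕ, ℕ} (hp : p ∈ lagPairs n) (hq : q ∈ lagPairs n) :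
    ∫ ω, X p.2 ω * X (p.2 + p.1) ω * X q.2 ω * X (q.2 + q.1) ω ∂P = if p = q then m else 0 := by
  obtain ⟨h, t⟩ := p
  obtain ⟨g, s⟩ := q
  rw [mk_mem_lagPairs] at hp hq
  simp only [Sigma.mk.injEq, heq_eq_eq]
  have hI : ∀ {a}, 1 ≤ a → a ≤ n → a ∈ Icc 1 n := fun h1 h2 => mem_Icc.2 ⟨h1, h2⟩
  split_ifs with hpq
  · obtain ⟨rfl, rfl⟩ := hpq
    simp_rw [← hpair t (hI hp.2.1 (by omega)) (t + h) (hI (by omega) hp.2.2) (by omega)]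
    congr 1 with ω
    ring
  -- some index occurs exactly once: `t` unless it is `s` or `s + g`, otherwise `t + h`
  by_cases ht : t ≠ s ∧ t ≠ s + g
  · exact hodd _ (hI hp.2.1 (by omega)) _ (hI (by omega) hp.2.2) _ (hI hq.2.1 (by omega))
      _ (hI (by omega) hq.2.2) (by omega) ht.1 ht.2
  · simp_rw [mul_comm (X t _) (X (t + h) _)]
    exact hodd _ (hI (by omega) hp.2.2) _ (hI hp.2.1 (by omega)) _ (hI hq.2.1 (by omega))
      _ (hI (by omega) hq.2.2) (by omega) (by omega) (by omega)

lemma integral_sq_weighted_lag_sum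
    (hint : ∀ a ∈ Icc 1 n, ∀ b ∈ Icc 1 n, ∀ c ∈ Icc 1 n, ∀ d ∈ Icc 1 n,
      Integrable (fun ω => X a ω * X b ω * X c ω * X d ω) P) (c : ℕ → ℝ) :
    ∫ ω, (∑ h ∈ Icc 1 (n - 1), (∑ t ∈ Icc 1 (n - h), X t ω * X (t + h) ω) * c h) ^ 2 ∂P =
      ∑ h ∈ Icc 1 (n - 1), ((n - h : ℕ) : ℝ) * c h ^ 2 * m := by
  have hmem : ∀ p ∈ lagPairs n, p.2 ∈ Icc 1 n ∧ p.2 + p.1 ∈ Icc 1 n := fun ⟨h, t⟩ hp => by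
    rw [mk_mem_lagPairs] at hp
    simp only [mem_Icc]
    omega
  have hexpand : ∀ ω, (∑ h ∈ Icc 1 (n - 1), (∑ t ∈ Icc 1 (n - h), X t ω * X (t + h) ω) * c h) ^ 2 =
      ∑ p ∈ lagPairs n, ∑ q ∈ lagPairs n,
        X p.2 ω * X (p.2 + p.1) ω * X q.2 ω * X (q.2 + q.1) ω * (c p.1 * c q.1) := fun ω => by
    simp_rw [sum_mul, lagPairs, ← sum_sigma (f := fun p : Σ _ : ℕ, ℕ =>
      X p.2 ω * X (p.2 + p.1) ω * c p.1), sq, sum_mul_sum]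
    exact sum_congr rfl fun p _ => sum_congr rfl fun q _ => by ring
  have hint' : ∀ p ∈ lagPairs n, ∀ q ∈ lagPairs n, Integrable (fun ω =>
      X p.2 ω * X (p.2 + p.1) ω * X q.2 ω * X (q.2 + q.1) ω * (c p.1 * c q.1)) P :=
    fun p hp q hq =>
      (hint _ (hmem p hp).1 _ (hmem p hp).2 _ (hmem q hq).1 _ (hmem q hq).2).mul_const _
  calc _ = ∑ p ∈ lagPairs n, ∑ q ∈ lagPairs n,
        (∫ ω, X p.2 ω * X (p.2 + p.1) ω * X q.2 ω * X (q.2 + q.1) ω ∂P) * (c p.1 * c q.1) := by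
        simp_rw [hexpand]
        rw [integral_finsetSum _ fun p hp => integrable_finsetSum _ (hint' p hp)]
        refine sum_congr rfl fun p hp => ?_
        rw [integral_finsetSum _ (hint' p hp)]
        simp_rw [integral_mul_const]
    _ = ∑ p ∈ lagPairs n, ∑ q ∈ lagPairs n, (if p = q then m else 0) * (c p.1 * c q.1) :=
        sum_congr rfl fun p hp => sum_congr rfl fun q hq => by
          rw [integral_lagPairs_product hodd hpair hp hq]
    _ = ∑ p ∈ lagPairs n, c p.1 ^ 2 * m := sum_congr rfl fun p hp => by
        simp_rw [ite_mul, zero_mul]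
        rw [sum_ite_eq, if_pos hp]
        ring
    _ = ∑ h ∈ Icc 1 (n - 1), ((n - h : ℕ) : ℝ) * c h ^ 2 * m := by
        rw [lagPairs, sum_sigma]
        refine sum_congr rfl fun h _ => ?_
        dsimp only
        rw [sum_const, Nat.card_Icc, nsmul_eq_mul, Nat.add_sub_cancel, mul_assoc]

end LagSum

lemma sum_Icc_one_sub_one_cast (n : ℕ) : ∑ h ∈ Icc 1 (n - 1), (h : ℝ) = n * (n - 1) / 2 := by
  rcases n with _ | n
  · simp
  rw [Nat.add_sub_cancel]
  push_cast
  induction n with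
  | zero => simp
  | succ k ih => rw [sum_Icc_succ_top (by omega), ih]; push_cast; ring

lemma sum_Icc_one_sub_one_reflect {M : Type*} [AddCommMonoid M] (n : ℕ) (f : ℕ → M) :
    ∑ h ∈ Icc 1 (n - 1), f (n - h) = ∑ h ∈ Icc 1 (n - 1), f h :=
  sum_nbij' (n - ·) (n - ·) (by simp only [mem_Icc]; omega) (by simp only [mem_Icc]; omega)
    (by simp only [mem_Icc]; omega) (by simp only [mem_Icc]; omega) fun _ _ => rfl

theorem stmt_10_general {Ω : Type*} [MeasureSpace Ω] (P : Measure Ω) [IsProbabilityMeasure P]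
    (n : ℕ) (Z : ℕ → Ω → ℝ)
    (hmeas : ∀ i, Measurable (Z i))
    (hindep : iIndepFun Z P)
    (hident : ∀ i j, IdentDistrib (Z i) (Z j) P P)
    (hsymm : ∀ i, Measure.map (Z i) P = Measure.map (fun ω => -(Z i ω)) P)
    (tz : ℕ → Ω → ℝ)
    (htz : ∀ t ω, tz t ω = Z t ω / Real.sqrt (∑ s ∈ Icc 1 n, Z s ω ^ 2))
    (T : ℝ → Ω → ℝ)
    (hT : ∀ ω' ω, T ω' ω =
      2 * ∑ h ∈ Icc 1 (n - 1),
        (∑ t ∈ Icc 1 (n - h), tz t ω * tz (t + h) ω) * Real.cos (h * ω'))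
    (ω' : ℝ) (hω' : ∃ k : ℤ, ω' = k * Real.pi) :
    (∫ ω, T ω' ω ^ 2 ∂P =
        (n : ℝ) * ((n : ℝ) - 1) * ∫ ω, tz 1 ω ^ 2 * tz 2 ω ^ 2 ∂P
          + (2 * (n : ℝ) * ∑ h ∈ Icc 1 (n - 1), Real.cos (2 * h * ω')
              - 2 * ∑ h ∈ Icc 1 (n - 1), (h : ℝ) * Real.cos (2 * h * ω'))
            * ∫ ω, tz 1 ω ^ 2 * tz 2 ω ^ 2 ∂P) ∧
      ∫ ω, T ω' ω ^ 2 ∂P =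
        2 * (n : ℝ) * ((n : ℝ) - 1) * ∫ ω, tz 1 ω ^ 2 * tz 2 ω ^ 2 ∂P := by
  obtain ⟨k, rfl⟩ := hω'
  obtain rfl : tz = fun t ω => selfNormalize (Icc 1 n) (Z · ω) t := funext₂ htz
  set m := ∫ ω, selfNormalize (Icc 1 n) (Z · ω) 1 ^ 2 * selfNormalize (Icc 1 n) (Z · ω) 2 ^ 2 ∂P
  have hlag := integral_sq_weighted_lag_sum (P := P) (n := n) (m := m)
    (fun a _ b _ c _ d _ => integral_selfNormalize_mul_eq_zero hmeas hindep _ (hsymm a))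
    (fun a ha b hb hab => by
      have h12 : 1 ∈ Icc 1 n ∧ 2 ∈ Icc 1 n := by simp only [mem_Icc] at ha hb ⊢; omega
      exact integral_selfNormalize_sq_mul_sq_eq hmeas hindep _ hident ha hb h12.1 h12.2 hab
        (by norm_num))
    (fun a ha b hb c hc d hd => integrable_selfNormalize_mul hmeas _ ha hb hc hd)
    (fun h : ℕ => Real.cos (h * (k * Real.pi)))
  have hcos_sq (h : ℕ) : Real.cos (h * (k * Real.pi)) ^ 2 = 1 := by
    rw [← sq_abs, show (h : ℝ) * (k * Real.pi) = ((h * k : ℤ) : ℝ) * Real.pi by push_cast; ring,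
      Real.abs_cos_int_mul_pi, one_pow]
  have hcos_two (h : ℕ) : Real.cos (2 * h * (k * Real.pi)) = 1 := by
    rw [show 2 * (h : ℝ) * (k * Real.pi) = ((h * k : ℤ) : ℝ) * (2 * Real.pi) by push_cast; ring,
      Real.cos_int_mul_two_pi]
  have hT_sq : ∫ ω, T (k * Real.pi) ω ^ 2 ∂P = 2 * n * (n - 1) * m := by
    simp_rw [hT, mul_pow, integral_const_mul, hlag, hcos_sq, mul_one, ← sum_mul,
      sum_Icc_one_sub_one_reflect n (fun h => (h : ℝ)), sum_Icc_one_sub_one_cast]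
    ring
  have hcard : (n : ℝ) * (Icc 1 (n - 1)).card = n * (n - 1) := by
    rcases n with _ | n <;> simp
  refine ⟨?_, hT_sq⟩
  simp_rw [hT_sq, hcos_two, mul_one, sum_const, nsmul_one, sum_Icc_one_sub_one_cast]
  linear_combination (-2 * m) * hcard

theorem stmt_10 {Ω : Type*} [MeasureSpace Ω] (P : Measure Ω) [IsProbabilityMeasure P]
    (n : ℕ) (hn : 2 ≤ n) (Z : ℕ → Ω → ℝ)
    (hmeas : ∀ i, Measurable (Z i))
    (hindep : iIndepFun Z P)
    (hident : ∀ i j, IdentDistrib (Z i) (Z j) P P)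
    (hsymm : ∀ i, Measure.map (Z i) P = Measure.map (fun ω => -(Z i ω)) P)
    (hpos : ∀ᵐ ω ∂P, 0 < ∑ t ∈ Icc 1 n, Z t ω ^ 2)
    (tz : ℕ → Ω → ℝ)
    (htz : ∀ t ω, tz t ω = Z t ω / Real.sqrt (∑ s ∈ Icc 1 n, Z s ω ^ 2))
    (T : ℝ → Ω → ℝ)
    (hT : ∀ ω' ω, T ω' ω =
      2 * ∑ h ∈ Icc 1 (n - 1),
        (∑ t ∈ Icc 1 (n - h), tz t ω * tz (t + h) ω) * Real.cos (h * ω'))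
    (ω' : ℝ) (hω' : ∃ k : ℤ, ω' = k * Real.pi) :
    (∫ ω, T ω' ω ^ 2 ∂P =
        (n : ℝ) * ((n : ℝ) - 1) * ∫ ω, tz 1 ω ^ 2 * tz 2 ω ^ 2 ∂P
          + (2 * (n : ℝ) * ∑ h ∈ Icc 1 (n - 1), Real.cos (2 * h * ω')
              - 2 * ∑ h ∈ Icc 1 (n - 1), (h : ℝ) * Real.cos (2 * h * ω'))
            * ∫ ω, tz 1 ω ^ 2 * tz 2 ω ^ 2 ∂P) ∧
      ∫ ω, T ω' ω ^ 2 ∂P =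
        2 * (n : ℝ) * ((n : ℝ) - 1) * ∫ ω, tz 1 ω ^ 2 * tz 2 ω ^ 2 ∂P :=
  stmt_10_general P n Z hmeas hindep hident hsymm tz htz T hT ω' hω'
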